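/- For every real E with 0 < |E| < 2, the function h : ℝ → ℝ defined by h(t) = ½ Re((−iℰ + t)²) − ln|ℰ̄ − i t| attains its global minimum exactly on the two-point set {0, 2ℰ_i}, and h(0) = h(2ℰ_i); equivalently, the function F₂(t) = e^{−h(t)} (the modulus of the integrand e^{−f₂} along the shifted contour b = −iℰ + t) has exactly two global maxima, at t = 0 and t = 2ℰ_i, and they have equal height. -/

import Mathlib

open scoped BigOperators Topology
open Matrix MeasureTheory Filter

noncomputable section

/-- `ℰ = E/2 - i√(1 - E²/4)`. -/
def calE (E : ℝ) : ℂ := ((E / 2 : ℝ) : ℂ) - (Real.sqrt (1 - E ^ 2 / 4) : ℝ) * Complex.I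
/-- `ℰ̄ = E - ℰ = E/2 + i√(1 - E²/4)`, the complex conjugate of `ℰ`. -/
def calEbar (E : ℝ) : ℂ := ((E / 2 : ℝ) : ℂ) + (Real.sqrt (1 - E ^ 2 / 4) : ℝ) * Complex.I

/-- `h(t) = ½ Re((-iℰ + t)²) - ln|ℰ̄ - it|`, the modulus exponent of the integrand along the
shifted contour `b = -iℰ + t`. -/
def saddleH (E t : ℝ) : ℝ :=
  (1 / 2) * (((-Complex.I * calE E + (t : ℂ)) ^ 2).re)
    - Real.log ‖calEbar E - Complex.I * (t : ℂ)‖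

lemma saddleH_eq (E t : ℝ) :
    saddleH E t = (1/2) * ((t - Real.sqrt (1 - E^2/4))^2 - E^2/4)
      - (1/2) * Real.log (E^2/4 + (t - Real.sqrt (1 - E^2/4))^2) := by
  set s := Real.sqrt (1 - E^2/4)
  have h1 : -Complex.I * calE E + (t : ℂ) = Complex.mk (t - s) (-(E/2)) := by
    apply Complex.ext <;> simp [calE, Complex.ext_iff, s]
    ring
  have h2 : calEbar E - Complex.I * (t : ℂ) = Complex.mk (E/2) (s - t) := by
    apply Complex.ext <;> simp [calEbar, s]
  have habs : ‖calEbar E - Complex.I * (t : ℂ)‖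
      = Real.sqrt (E^2/4 + (t - s)^2) := by
    rw [h2, Complex.norm_def, Complex.normSq_mk]
    congr 1; ring
  rw [saddleH, h1, habs, Real.log_sqrt (by positivity)]
  simp [pow_two, Complex.mul_re]
  ring

/-- For `0 < |E| < 2`, the function `h` attains its global minimum exactly on
the two-point set `{0, 2ℰ_i}`, with `h(0) = h(2ℰ_i)` (the two saddles have equal height). -/
theorem second_saddle_two_minima (E : ℝ) (hE0 : E ≠ 0) (hE : |E| < 2) :
    (∀ t : ℝ, saddleH E 0 ≤ saddleH E t) ∧
    saddleH E (2 * Real.sqrt (1 - E ^ 2 / 4)) = saddleH E 0 ∧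
    (∀ t : ℝ, saddleH E t = saddleH E 0 →
      t = 0 ∨ t = 2 * Real.sqrt (1 - E ^ 2 / 4)) := by
  have hE2 : E^2 < 4 := by
    have := abs_lt.mp hE
    nlinarith [this.1, this.2]
  set a := E^2/4 with ha_def
  set s := Real.sqrt (1 - E^2/4) with hs_def
  have ha : (0:ℝ) < a := by rw [ha_def]; positivity
  have hs2 : s^2 = 1 - a := Real.sq_sqrt (by linarith)
  have hs0 : 0 < s := Real.sqrt_pos.mpr (by nlinarith)
  have h0 : saddleH E 0 = (1/2) * ((1-a) - a) := by
    rw [saddleH_eq]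
    simp only [← hs_def, ← ha_def]
    rw [show (0-s)^2 = 1-a by rw [← hs2]; ring,
      show a + (1-a) = 1 by ring, Real.log_one]
    ring
  refine ⟨?_, ?_, ?_⟩
  · intro t
    rw [h0, saddleH_eq]
    simp only [← hs_def, ← ha_def]
    set u := (t - s)^2 with hu
    have hu0 : 0 ≤ u := sq_nonneg _
    have hlog : Real.log (a + u) ≤ a + u - 1 :=
      Real.log_le_sub_one_of_pos (by linarith)
    nlinarith
  · rw [h0, saddleH_eq]
    simp only [← hs_def, ← ha_def]
    rw [show (2*s - s)^2 = 1-a by rw [← hs2]; ring,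
      show a + (1-a) = 1 by ring, Real.log_one]
    ring
  · intro t ht
    rw [h0, saddleH_eq] at ht
    simp only [← hs_def, ← ha_def] at ht
    set u := (t - s)^2 with hu
    have hau : a + u = 1 := by
      by_contra hne
      have hu0 : 0 ≤ u := sq_nonneg _
      have hlog : Real.log (a + u) < a + u - 1 :=
        Real.log_lt_sub_one_of_pos (by linarith) hne
      nlinarith
    have h2 : (t - s)^2 = s^2 := by rw [hs2, ← hu]; linarith
    rcases sq_eq_sq_iff_eq_or_eq_neg.mp h2 with h | h
    · right; linarith
    · left; linarith
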